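/- arXiv:2401.01231 — 3 statements merged into one kernel-verified Lean document; each statement's English description precedes it below -/
import Mathlib

section
/- One missing data point case (Proposition 1 with L = 1): if f_Θ(s_{n+1} | s_{1:n}) = Σ_{i=1}^n w_θ(i, n+1) κ₂(s_{n+1} − sᵢ, h̲) and the location s_{u₁} (with 1 < u₁ ≤ n) is unobserved, then the marginal density obtained by integrating out s_{u₁}, namely ∫ f_Θ(s | s_{1:n}) · f_Θ(s_{u₁} | s_{1:(u₁−1)}) ds_{u₁}, equals Σ_{i ∈ (1:n)\{u₁}} w_θ(i, n+1) κ₂(s − sᵢ, h̲) + w_θ(u₁, n+1) · Σ_{j=1}^{u₁−1} w_θ(j, u₁) κ₂(s − s_j, √2·h̲). -/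
open MeasureTheory Real

/-- Univariate centered Gaussian density with standard deviation `σ`. -/
noncomputable def gauss1 (σ x : ℝ) : ℝ :=
  (1 / (Real.sqrt (2 * Real.pi) * σ)) * Real.exp (-(x ^ 2) / (2 * σ ^ 2))

/-- Bivariate product Gaussian kernel `κ₂(z, h)`. -/
noncomputable def kernel2 (z h : ℝ × ℝ) : ℝ := gauss1 h.1 z.1 * gauss1 h.2 z.2

/-!
Expanding the product, each summand that does not involve the missing location integrates
against the normalized mixture for `s_{u₁}` to its own coefficient. In the summand that does,
completing the square in `z` factors `κ₂(s - z, h̲) κ₂(z - s_j, h̲)` as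
`κ₂(s - s_j, √2·h̲)` times a Gaussian kernel in `z` of bandwidth `h̲/√2`, which integrates to 1.
-/

open ProbabilityTheory

lemma gauss1_sub_eq_gaussianPDFReal {σ : ℝ} (hσ : 0 ≤ σ) (c x : ℝ) :
    gauss1 σ (x - c) = gaussianPDFReal c (σ ^ 2).toNNReal x := by
  rw [gaussianPDFReal, gauss1, Real.coe_toNNReal _ (sq_nonneg σ),
    sqrt_mul (by positivity) (σ ^ 2), sqrt_sq hσ, one_div]

lemma integrable_gauss1_sub {σ : ℝ} (hσ : 0 ≤ σ) (c : ℝ) :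
    Integrable fun x ↦ gauss1 σ (x - c) := by
  simpa only [gauss1_sub_eq_gaussianPDFReal hσ] using integrable_gaussianPDFReal c _

lemma integral_gauss1_sub {σ : ℝ} (hσ : 0 < σ) (c : ℝ) : ∫ x, gauss1 σ (x - c) = 1 := by
  simp only [gauss1_sub_eq_gaussianPDFReal hσ.le]
  exact integral_gaussianPDFReal_eq_one c (by simpa using hσ.ne')

lemma gauss1_mul_gauss1 {σ : ℝ} (hσ : 0 < σ) (a b z : ℝ) :
    gauss1 σ (a - z) * gauss1 σ (z - b) =
      gauss1 (√2 * σ) (a - b) * gauss1 (σ / √2) (z - 2⁻¹ * (a + b)) := by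
  have hs2 : √2 ^ 2 = 2 := sq_sqrt (by norm_num)
  simp only [gauss1, mul_mul_mul_comm _ (rexp _), ← exp_add]
  congr 1
  · field_simp
  · congr 1
    have hs4 : √2 ^ 4 = 4 := by rw [show √2 ^ 4 = (√2 ^ 2) ^ 2 by ring, hs2]; norm_num
    field_simp
    ring_nf
    simp only [hs2, hs4]
    ring

section Kernel2

variable {h₁ h₂ : ℝ}

lemma kernel2_sub_eq_mul (h₁ h₂ : ℝ) (z c : ℝ × ℝ) :
    kernel2 (z - c) (h₁, h₂) = gauss1 h₁ (z.1 - c.1) * gauss1 h₂ (z.2 - c.2) := rfl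

lemma integrable_kernel2_sub (hh₁ : 0 ≤ h₁) (hh₂ : 0 ≤ h₂) (c : ℝ × ℝ) :
    Integrable fun z : ℝ × ℝ ↦ kernel2 (z - c) (h₁, h₂) := by
  simp only [kernel2_sub_eq_mul, Measure.volume_eq_prod]
  exact (integrable_gauss1_sub hh₁ c.1).mul_prod (integrable_gauss1_sub hh₂ c.2)

lemma integral_kernel2_sub (hh₁ : 0 < h₁) (hh₂ : 0 < h₂) (c : ℝ × ℝ) :
    ∫ z : ℝ × ℝ, kernel2 (z - c) (h₁, h₂) = 1 := by
  simp only [kernel2_sub_eq_mul, Measure.volume_eq_prod]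
  rw [integral_prod_mul (fun x ↦ gauss1 h₁ (x - c.1)) (fun y ↦ gauss1 h₂ (y - c.2)),
    integral_gauss1_sub hh₁, integral_gauss1_sub hh₂, one_mul]

lemma kernel2_mul_kernel2 (hh₁ : 0 < h₁) (hh₂ : 0 < h₂) (a b z : ℝ × ℝ) :
    kernel2 (a - z) (h₁, h₂) * kernel2 (z - b) (h₁, h₂) =
      kernel2 (a - b) (√2 * h₁, √2 * h₂) *
        kernel2 (z - (2 : ℝ)⁻¹ • (a + b)) (h₁ / √2, h₂ / √2) := by
  simp only [kernel2, Prod.fst_sub, Prod.snd_sub, Prod.smul_fst, Prod.smul_snd, Prod.fst_add,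
    Prod.snd_add, smul_eq_mul]
  rw [mul_mul_mul_comm, gauss1_mul_gauss1 hh₁, gauss1_mul_gauss1 hh₂]
  ring

lemma integrable_kernel2_mul_kernel2 (hh₁ : 0 < h₁) (hh₂ : 0 < h₂) (a b : ℝ × ℝ) :
    Integrable fun z ↦ kernel2 (a - z) (h₁, h₂) * kernel2 (z - b) (h₁, h₂) := by
  simp only [kernel2_mul_kernel2 hh₁ hh₂]
  exact (integrable_kernel2_sub (by positivity) (by positivity) _).const_mul _

lemma integral_kernel2_mul_kernel2 (hh₁ : 0 < h₁) (hh₂ : 0 < h₂) (a b : ℝ × ℝ) :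
    ∫ z, kernel2 (a - z) (h₁, h₂) * kernel2 (z - b) (h₁, h₂) =
      kernel2 (a - b) (√2 * h₁, √2 * h₂) := by
  simp only [kernel2_mul_kernel2 hh₁ hh₂, integral_const_mul]
  rw [integral_kernel2_sub (by positivity) (by positivity), mul_one]

variable {ι : Type*} (t : Finset ι) (v : ι → ℝ) (c : ι → ℝ × ℝ)

lemma integrable_sum_kernel2 (hh₁ : 0 ≤ h₁) (hh₂ : 0 ≤ h₂) :
    Integrable fun z ↦ ∑ j ∈ t, v j * kernel2 (z - c j) (h₁, h₂) :=
  integrable_finsetSum _ fun j _ ↦ (integrable_kernel2_sub hh₁ hh₂ (c j)).const_mul (v j)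

lemma integral_sum_kernel2 (hh₁ : 0 < h₁) (hh₂ : 0 < h₂) :
    ∫ z, ∑ j ∈ t, v j * kernel2 (z - c j) (h₁, h₂) = ∑ j ∈ t, v j := by
  rw [integral_finsetSum _ fun j _ ↦ (integrable_kernel2_sub hh₁.le hh₂.le (c j)).const_mul (v j)]
  simp only [integral_const_mul, integral_kernel2_sub hh₁ hh₂, mul_one]

lemma integrable_kernel2_mul_sum_kernel2 (hh₁ : 0 < h₁) (hh₂ : 0 < h₂) (a : ℝ × ℝ) :
    Integrable fun z ↦ kernel2 (a - z) (h₁, h₂) * ∑ j ∈ t, v j * kernel2 (z - c j) (h₁, h₂) := by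
  simp only [Finset.mul_sum, mul_left_comm (kernel2 (a - _) _) (v _)]
  exact integrable_finsetSum _ fun j _ ↦
    (integrable_kernel2_mul_kernel2 hh₁ hh₂ a (c j)).const_mul (v j)

lemma integral_kernel2_mul_sum_kernel2 (hh₁ : 0 < h₁) (hh₂ : 0 < h₂) (a : ℝ × ℝ) :
    ∫ z, kernel2 (a - z) (h₁, h₂) * ∑ j ∈ t, v j * kernel2 (z - c j) (h₁, h₂) =
      ∑ j ∈ t, v j * kernel2 (a - c j) (√2 * h₁, √2 * h₂) := by
  simp only [Finset.mul_sum, mul_left_comm (kernel2 (a - _) _) (v _)]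
  rw [integral_finsetSum _ fun j _ ↦
    (integrable_kernel2_mul_kernel2 hh₁ hh₂ a (c j)).const_mul (v j)]
  simp only [integral_const_mul, integral_kernel2_mul_kernel2 hh₁ hh₂]

end Kernel2

theorem one_missing_point_general (n u₁ : ℕ) (hu₁ : 1 < u₁) (hun : u₁ ≤ n)
    (w : ℕ → ℕ → ℝ)
    (hnorm : ∀ m, 2 ≤ m → ∑ j ∈ Finset.Icc 1 (m - 1), w j m = 1)
    (σ : ℕ → ℝ × ℝ) (h δlon δlat : ℝ)
    (hh : 0 < h) (hδlon : 0 < δlon) (hδlat : 0 < δlat) (s : ℝ × ℝ) :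
    (∫ z : ℝ × ℝ,
        (∑ i ∈ Finset.Icc 1 n,
            w i (n + 1) * kernel2 (s - (if i = u₁ then z else σ i)) (h * δlon, h * δlat)) *
          (∑ j ∈ Finset.Icc 1 (u₁ - 1), w j u₁ * kernel2 (z - σ j) (h * δlon, h * δlat)))
      = (∑ i ∈ (Finset.Icc 1 n).erase u₁,
            w i (n + 1) * kernel2 (s - σ i) (h * δlon, h * δlat)) +
          w u₁ (n + 1) *
            ∑ j ∈ Finset.Icc 1 (u₁ - 1),
              w j u₁ *
                kernel2 (s - σ j) (Real.sqrt 2 * (h * δlon), Real.sqrt 2 * (h * δlat)) := by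
  have hlon : 0 < h * δlon := mul_pos hh hδlon
  have hlat : 0 < h * δlat := mul_pos hh hδlat
  set H : ℝ × ℝ := (h * δlon, h * δlat)
  set observed := ∑ i ∈ (Finset.Icc 1 n).erase u₁, w i (n + 1) * kernel2 (s - σ i) H
  set prior : ℝ × ℝ → ℝ := fun z ↦ ∑ j ∈ Finset.Icc 1 (u₁ - 1), w j u₁ * kernel2 (z - σ j) H
  have split : ∀ z, ∑ i ∈ Finset.Icc 1 n, w i (n + 1) * kernel2 (s - (if i = u₁ then z else σ i)) H
      = observed + w u₁ (n + 1) * kernel2 (s - z) H := by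
    intro z
    rw [← Finset.sum_erase_add _ _ (Finset.mem_Icc.mpr ⟨hu₁.le, hun⟩), if_pos rfl]
    congr 1
    exact Finset.sum_congr rfl fun i hi ↦ by rw [if_neg (Finset.ne_of_mem_erase hi)]
  have hprior : ∫ z, prior z = 1 := by
    rw [integral_sum_kernel2 _ _ _ hlon hlat, hnorm u₁ hu₁]
  simp only [split, add_mul, mul_assoc]
  rw [integral_add ((integrable_sum_kernel2 _ _ _ hlon.le hlat.le).const_mul _)
      ((integrable_kernel2_mul_sum_kernel2 _ _ _ hlon hlat s).const_mul _),
    integral_const_mul, integral_const_mul, hprior, mul_one,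
    integral_kernel2_mul_sum_kernel2 _ _ _ hlon hlat]

/-- Proposition 1 with one missing data point (`L = 1`): integrating out the unobserved
location `s_{u₁}` (with `1 < u₁ ≤ n`) from
`f_Θ(s | s_{1:n}) · f_Θ(s_{u₁} | s_{1:(u₁−1)})` yields
`Σ_{i ∈ (1:n)\{u₁}} w_θ(i,n+1) κ₂(s − sᵢ, h̲)
  + w_θ(u₁,n+1) Σ_{j=1}^{u₁−1} w_θ(j,u₁) κ₂(s − s_j, √2·h̲)`. -/
theorem one_missing_point (n u₁ : ℕ) (hu₁ : 1 < u₁) (hun : u₁ ≤ n)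
    (w : ℕ → ℕ → ℝ) (hw : ∀ i m, 0 ≤ w i m)
    (hnorm : ∀ m, 2 ≤ m → ∑ j ∈ Finset.Icc 1 (m - 1), w j m = 1)
    (σ : ℕ → ℝ × ℝ) (h δlon δlat : ℝ)
    (hh : 0 < h) (hδlon : 0 < δlon) (hδlat : 0 < δlat) (s : ℝ × ℝ) :
    (∫ z : ℝ × ℝ,
        (∑ i ∈ Finset.Icc 1 n,
            w i (n + 1) * kernel2 (s - (if i = u₁ then z else σ i)) (h * δlon, h * δlat)) *
          (∑ j ∈ Finset.Icc 1 (u₁ - 1), w j u₁ * kernel2 (z - σ j) (h * δlon, h * δlat)))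
      = (∑ i ∈ (Finset.Icc 1 n).erase u₁,
            w i (n + 1) * kernel2 (s - σ i) (h * δlon, h * δlat)) +
          w u₁ (n + 1) *
            ∑ j ∈ Finset.Icc 1 (u₁ - 1),
              w j u₁ *
                kernel2 (s - σ j) (Real.sqrt 2 * (h * δlon), Real.sqrt 2 * (h * δlat)) :=
  one_missing_point_general n u₁ hu₁ hun w hnorm σ h δlon δlat hh hδlon hδlat s
end

section
/- The total mass of the general closed-form likelihood is 1: under the normalization Σ_{i=1}^{m−1} w_θ(i,m) = 1 for all m, the coefficients of the kernels in Proposition 1's formula sum to 1, i.e., Σ_{i∈(1:n)\𝒮_{L+1}} w_θ(i,n+1) + Σ_{m=1}^{L} Σ_{1≤i₁<⋯<i_m≤L} w_θ(u_{i₁},u_{i₂})⋯w_θ(u_{i_m},n+1)·(Σ_{j∈(1:u_{i₁}−1)\𝒮_{i₁}} w_θ(j,u_{i₁})) = 1. -/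
/-!
Read `w i m` as the probability that a walk running backwards from `m` jumps to `i < m`. The
expression is the probability that the walk started at `n + 1` eventually stops at an observed
index: it passes through an increasing chain of missing indices and then exits to an observed
one. Induct on the largest missing index `U`. Chains avoiding `U` are the chains of the smaller
problem; chains through `U` end with the jump `U → n + 1`, preceded by a complete walk started at
`U`, whose mass is `1` by induction; and the direct term loses exactly `w U (n + 1)`.
-/

open Finset

open scoped Classical in
theorem Fin.sum_strictMono_last_ne {β : Type*} [AddCommMonoid β] {m L : ℕ}
    (f : (Fin (m + 1) → Fin (L + 1)) → β) :
    ∑ c ∈ univ.filter (fun c : Fin (m + 1) → Fin (L + 1) =>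
        StrictMono c ∧ c (Fin.last m) ≠ Fin.last L), f c =
      ∑ c ∈ univ.filter (fun c : Fin (m + 1) → Fin L => StrictMono c), f (Fin.castSucc ∘ c) := by
  symm
  refine sum_bij (fun c _ => Fin.castSucc ∘ c) ?_ ?_ ?_ (fun _ _ => rfl)
  · intro c hc
    simp only [mem_filter, mem_univ, true_and] at hc ⊢
    exact ⟨Fin.strictMono_castSucc.comp hc, (Fin.castSucc_lt_last _).ne⟩
  · intro c _ c' _ h
    exact (Fin.castSucc_injective L).comp_left h
  · intro c hc
    simp only [mem_filter, mem_univ, true_and] at hc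
    obtain ⟨hmono, hlast⟩ := hc
    have hne : ∀ k, c k ≠ Fin.last L := fun k =>
      ((hmono.monotone (Fin.le_last k)).trans_lt (Fin.lt_last_iff_ne_last.mpr hlast)).ne
    refine ⟨fun k => (c k).castPred (hne k), ?_, funext fun k => Fin.castSucc_castPred _ _⟩
    simp only [mem_filter, mem_univ, true_and]
    exact fun a b hab => Fin.castPred_lt_castPred_iff.mpr (hmono hab)

open scoped Classical in
theorem Fin.sum_strictMono_last_eq {β : Type*} [AddCommMonoid β] {m L : ℕ}
    (f : (Fin (m + 1) → Fin (L + 1)) → β) :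
    ∑ c ∈ univ.filter (fun c : Fin (m + 1) → Fin (L + 1) =>
        StrictMono c ∧ c (Fin.last m) = Fin.last L), f c =
      ∑ c ∈ univ.filter (fun c : Fin m → Fin L => StrictMono c),
        f (Fin.snoc (Fin.castSucc ∘ c) (Fin.last L)) := by
  symm
  refine sum_bij (fun c _ => Fin.snoc (Fin.castSucc ∘ c) (Fin.last L)) ?_ ?_ ?_ (fun _ _ => rfl)
  · intro c hc
    simp only [mem_filter, mem_univ, true_and] at hc ⊢
    refine ⟨?_, Fin.snoc_last _ _⟩
    rw [← Fin.insertNth_last', Fin.strictMono_insertNth_iff]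
    exact ⟨Fin.strictMono_castSucc.comp hc, fun i _ => Fin.castSucc_lt_last _,
      fun i hi => absurd hi (Fin.castSucc_lt_last i).not_ge⟩
  · intro c _ c' _ h
    have := congrArg Fin.init h
    simp only [Fin.init_snoc] at this
    exact (Fin.castSucc_injective L).comp_left this
  · intro c hc
    simp only [mem_filter, mem_univ, true_and] at hc
    obtain ⟨hmono, hlast⟩ := hc
    have hne : ∀ k : Fin m, c k.castSucc ≠ Fin.last L := fun k =>
      hlast ▸ (hmono (Fin.castSucc_lt_last k)).ne
    refine ⟨fun k => (c k.castSucc).castPred (hne k), ?_, ?_⟩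
    · simp only [mem_filter, mem_univ, true_and]
      exact fun a b hab =>
        Fin.castPred_lt_castPred_iff.mpr (hmono (Fin.castSucc_lt_castSucc_iff.mpr hab))
    · conv_rhs => rw [← Fin.snoc_init_self c, hlast]
      congr 1

open scoped Classical in
theorem Fin.filter_strictMono_eq_empty {m L : ℕ} (h : L < m) :
    univ.filter (fun c : Fin m → Fin L => StrictMono c) = ∅ :=
  filter_eq_empty_iff.mpr fun c _ hc => (Fin.le_of_injective c hc.injective).not_gt h

namespace ClosedFormLikelihood

section

variable {L : ℕ} (u : Fin L → ℕ) (w : ℕ → ℕ → ℝ)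

def directMass (t : ℕ) : ℝ :=
  ∑ i ∈ (Icc 1 (t - 1)).filter (fun i => ∀ k, u k ≠ i), w i t

def exitMass (q : Fin L) : ℝ :=
  ∑ j ∈ (Icc 1 (u q - 1)).filter (fun j => ∀ k, k < q → u k ≠ j), w j (u q)

def pathWeight {m : ℕ} (c : Fin (m + 1) → Fin L) (t : ℕ) : ℝ :=
  (∏ k : Fin m, w (u (c k.castSucc)) (u (c k.succ))) * w (u (c (Fin.last m))) t *
    exitMass u w (c 0)

open scoped Classical in
def chainMass (t : ℕ) : ℝ :=
  ∑ m ∈ range L, ∑ c ∈ univ.filter (fun c : Fin (m + 1) → Fin L => StrictMono c),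
    pathWeight u w c t

end

section

variable {L : ℕ} (u : Fin (L + 1) → ℕ) (w : ℕ → ℕ → ℝ)

theorem directMass_init {t : ℕ} (hU : u (Fin.last L) ∈ Icc 1 (t - 1))
    (hne : ∀ k : Fin L, u k.castSucc ≠ u (Fin.last L)) :
    directMass (Fin.init u) w t = directMass u w t + w (u (Fin.last L)) t := by
  have hsplit : ∀ i, (if ∀ k : Fin L, Fin.init u k ≠ i then w i t else 0) =
      (if ∀ k, u k ≠ i then w i t else 0) + if u (Fin.last L) = i then w i t else 0 := by
    intro i
    by_cases hi : u (Fin.last L) = i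
    · subst hi
      simp [Fin.init, hne]
    · rw [if_neg hi, add_zero]
      exact if_congr (by simp [Fin.forall_fin_succ', Fin.init, hi]) rfl rfl
  simp only [directMass, sum_filter, hsplit, sum_add_distrib, sum_ite_eq, hU, if_true]

theorem exitMass_init (q : Fin L) : exitMass (Fin.init u) w q = exitMass u w q.castSucc := by
  unfold exitMass
  congr 1
  refine filter_congr fun j _ => ?_
  simp [Fin.forall_fin_succ', Fin.init, (Fin.castSucc_lt_last q).not_gt]

theorem exitMass_last :
    exitMass u w (Fin.last L) = directMass (Fin.init u) w (u (Fin.last L)) := by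
  unfold exitMass directMass
  congr 1
  refine filter_congr fun j _ => ?_
  simp [Fin.forall_fin_succ', Fin.init, Fin.castSucc_lt_last]

theorem pathWeight_castSucc_comp {m : ℕ} (c : Fin (m + 1) → Fin L) (t : ℕ) :
    pathWeight u w (Fin.castSucc ∘ c) t = pathWeight (Fin.init u) w c t := by
  simp only [pathWeight, exitMass_init, Function.comp_apply, Fin.init]

theorem pathWeight_snoc_zero (c : Fin 0 → Fin L) (t : ℕ) :
    pathWeight u w (Fin.snoc (Fin.castSucc ∘ c) (Fin.last L) : Fin 1 → Fin (L + 1)) t =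
      w (u (Fin.last L)) t * exitMass u w (Fin.last L) := by
  simp [pathWeight, Fin.snoc]

theorem pathWeight_snoc {m : ℕ} (c : Fin (m + 1) → Fin L) (t : ℕ) :
    pathWeight u w (Fin.snoc (Fin.castSucc ∘ c) (Fin.last L) : Fin (m + 2) → Fin (L + 1)) t =
      w (u (Fin.last L)) t * pathWeight (Fin.init u) w c (u (Fin.last L)) := by
  simp only [pathWeight, Fin.prod_univ_castSucc, Fin.succ_castSucc, Fin.succ_last,
    ← Fin.castSucc_zero, Fin.snoc_castSucc, Fin.snoc_last, Function.comp_apply, exitMass_init,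
    Fin.init]
  ring

theorem chainMass_succ (t : ℕ) :
    chainMass u w t = chainMass (Fin.init u) w t +
      w (u (Fin.last L)) t *
        (directMass (Fin.init u) w (u (Fin.last L)) +
          chainMass (Fin.init u) w (u (Fin.last L))) := by
  classical
  have hsplit : ∀ m, ∑ c ∈ univ.filter (fun c : Fin (m + 1) → Fin (L + 1) => StrictMono c),
      pathWeight u w c t =
        ∑ c ∈ univ.filter (fun c : Fin (m + 1) → Fin L => StrictMono c),
          pathWeight (Fin.init u) w c t +
        ∑ c ∈ univ.filter (fun c : Fin m → Fin L => StrictMono c),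
          pathWeight u w (Fin.snoc (Fin.castSucc ∘ c) (Fin.last L)) t := by
    intro m
    rw [← sum_filter_not_add_sum_filter _ (fun c => c (Fin.last m) = Fin.last L),
      filter_filter, filter_filter, Fin.sum_strictMono_last_ne, Fin.sum_strictMono_last_eq]
    simp only [pathWeight_castSucc_comp]
  have hlast : ∑ m ∈ range (L + 1), ∑ c ∈ univ.filter (fun c : Fin m → Fin L => StrictMono c),
      pathWeight u w (Fin.snoc (Fin.castSucc ∘ c) (Fin.last L)) t =
        w (u (Fin.last L)) t *
          (directMass (Fin.init u) w (u (Fin.last L)) +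
            chainMass (Fin.init u) w (u (Fin.last L))) := by
    have hempty : univ.filter (fun c : Fin 0 → Fin L => StrictMono c) = univ :=
      filter_true_of_mem fun _ _ a => a.elim0
    rw [sum_range_succ', hempty, univ_unique, sum_singleton, pathWeight_snoc_zero,
      exitMass_last, mul_add, add_comm]
    simp only [pathWeight_snoc, ← mul_sum]
    rfl
  conv_lhs => rw [chainMass]
  rw [sum_congr rfl fun m _ => hsplit m, sum_add_distrib, hlast, sum_range_succ,
    Fin.filter_strictMono_eq_empty (Nat.lt_succ_self L), sum_empty, add_zero]
  rfl

end

theorem directMass_add_chainMass {L t : ℕ} (u : Fin L → ℕ) (w : ℕ → ℕ → ℝ) (hu : StrictMono u)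
    (hu1 : ∀ k, 1 < u k) (hut : ∀ k, u k < t) (ht : 2 ≤ t)
    (hnorm : ∀ m, 2 ≤ m → ∑ i ∈ Icc 1 (m - 1), w i m = 1) :
    directMass u w t + chainMass u w t = 1 := by
  induction L generalizing t with
  | zero => simpa [directMass, chainMass] using hnorm t ht
  | succ L ih =>
    have hinit : StrictMono (Fin.init u) := hu.comp Fin.strictMono_castSucc
    have hlast_mem : u (Fin.last L) ∈ Icc 1 (t - 1) := by
      have := hu1 (Fin.last L)
      have := hut (Fin.last L)
      rw [mem_Icc]
      omega
    have hmass_t := ih (Fin.init u) hinit (fun k => hu1 _) (fun k => hut _) ht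
    have hmass_last := ih (Fin.init u) hinit (fun k => hu1 _)
      (fun k => hu (Fin.castSucc_lt_last k)) (hu1 _)
    rw [directMass_init u w hlast_mem fun k => (hu (Fin.castSucc_lt_last k)).ne] at hmass_t
    rw [chainMass_succ, hmass_last]
    linarith

end ClosedFormLikelihood

open scoped Classical in
theorem total_mass_one_general (L n : ℕ) (u : Fin L → ℕ) (hu : StrictMono u)
    (hu1 : ∀ k, 1 < u k) (hun : ∀ k, u k ≤ n) (hn : 1 ≤ n)
    (w : ℕ → ℕ → ℝ)
    (hnorm : ∀ m, 2 ≤ m → ∑ i ∈ Finset.Icc 1 (m - 1), w i m = 1) :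
    (∑ i ∈ (Finset.Icc 1 n).filter (fun i => ∀ k : Fin L, u k ≠ i), w i (n + 1)) +
        ∑ m ∈ Finset.range L,
          ∑ c ∈ Finset.univ.filter (fun c : Fin (m + 1) → Fin L => StrictMono c),
            (∏ k : Fin m, w (u (c k.castSucc)) (u (c k.succ))) *
              w (u (c (Fin.last m))) (n + 1) *
              (∑ j ∈ (Finset.Icc 1 (u (c 0) - 1)).filter (fun j => ∀ k, k < c 0 → u k ≠ j),
                w j (u (c 0)))
      = 1 :=
  -- the left-hand side is `directMass u w (n + 1) + chainMass u w (n + 1)` by unfolding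
  ClosedFormLikelihood.directMass_add_chainMass u w hu hu1 (fun k => Nat.lt_succ_of_le (hun k))
    (by omega) hnorm

open scoped Classical in
/-- Total mass of the general closed-form likelihood is 1: under the normalization
`Σ_{i=1}^{m−1} w_θ(i,m) = 1` for all `m ≥ 2`, the coefficients of the kernels in
Proposition 1's formula sum to 1, i.e.
`Σ_{i∈(1:n)\𝒮_{L+1}} w_θ(i,n+1)
 + Σ_{m=1}^{L} Σ_{1≤i₁<⋯<i_m≤L} w_θ(u_{i₁},u_{i₂})⋯w_θ(u_{i_m},n+1)
     ·(Σ_{j∈(1:u_{i₁}−1)\𝒮_{i₁}} w_θ(j,u_{i₁})) = 1`.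
(Missing indices `u : Fin L → ℕ` listed increasingly; increasing `m`-tuples are encoded by
strictly monotone `c : Fin (m'+1) → Fin L` with tuple length `m'+1 ∈ {1,…,L}`;
`𝒮_q = {u k : k < q}`.) -/
theorem total_mass_one (L n : ℕ) (u : Fin L → ℕ) (hu : StrictMono u)
    (hu1 : ∀ k, 1 < u k) (hun : ∀ k, u k ≤ n) (hn : 1 ≤ n)
    (w : ℕ → ℕ → ℝ) (hw : ∀ i m, 0 ≤ w i m)
    (hnorm : ∀ m, 2 ≤ m → ∑ i ∈ Finset.Icc 1 (m - 1), w i m = 1) :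
    (∑ i ∈ (Finset.Icc 1 n).filter (fun i => ∀ k : Fin L, u k ≠ i), w i (n + 1)) +
        ∑ m ∈ Finset.range L,
          ∑ c ∈ Finset.univ.filter (fun c : Fin (m + 1) → Fin L => StrictMono c),
            (∏ k : Fin m, w (u (c k.castSucc)) (u (c k.succ))) *
              w (u (c (Fin.last m))) (n + 1) *
              (∑ j ∈ (Finset.Icc 1 (u (c 0) - 1)).filter (fun j => ∀ k, k < c 0 → u k ≠ j),
                w j (u (c 0)))
      = 1 :=
  total_mass_one_general L n u hu hu1 hun hn w hnorm
end

section
/- Stochastic inconsistency of the renormalized partial model (Remark 1): there exist points s₁, s₂ ∈ ℝ², weights, and bandwidth h̲ such that, with the renormalized model f̃ that drops the missing point u₁ = 2 from the kernel sum and renormalizes the weights (n = 2 with s₂ missing), f̃_Θ(s₃ | s₁) ≠ ∫ f̃_Θ(s₃ | s₁, s₂)·f̃_Θ(s₂ | s₁) ds₂, i.e., the Chapman–Kolmogorov consistency equation fails. -/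
/-!
With `s₂` integrated out, the right-hand side of the Chapman–Kolmogorov equation is
`w₁₃ κ₂(s₃ − s₁, h) + w₂₃ κ₂(s₃ − s₁, √2 h)`, since two Gaussian kernels convolve to a wider one.
Taking `s₃ = s₁` and all weight on `w₂₃`, it becomes `∫ κ₂(z, h)² dz = κ₂(0, h) / 2`, which is not
`κ₂(0, h)`.
-/

open MeasureTheory Real

lemma gauss1_pos {σ : ℝ} (hσ : 0 < σ) (x : ℝ) : 0 < gauss1 σ x := by
  unfold gauss1
  positivity

lemma gauss1_neg (σ x : ℝ) : gauss1 σ (-x) = gauss1 σ x := by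
  simp only [gauss1, neg_sq]

lemma gauss1_zero (σ : ℝ) : gauss1 σ 0 = 1 / (√(2 * π) * σ) := by
  simp [gauss1]

lemma gauss1_sq (σ x : ℝ) :
    gauss1 σ x ^ 2 = 1 / (2 * π * σ ^ 2) * exp (-(1 / σ ^ 2) * x ^ 2) := by
  rw [gauss1, mul_pow, ← exp_nat_mul, div_pow, mul_pow, sq_sqrt (by positivity)]
  ring_nf

lemma integral_gauss1_sq {σ : ℝ} (hσ : 0 < σ) : ∫ x, gauss1 σ x ^ 2 = 1 / (2 * √π * σ) := by
  simp_rw [gauss1_sq]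
  rw [integral_const_mul, integral_gaussian, div_div_eq_mul_div, div_one, sqrt_mul pi_pos.le,
    sqrt_sq hσ.le]
  have hπ : π = √π ^ 2 := (sq_sqrt pi_pos.le).symm
  have hr : 0 < √π := sqrt_pos.2 pi_pos
  generalize √π = r at hπ hr ⊢
  rw [hπ]
  field_simp

lemma kernel2_pos {h : ℝ × ℝ} (h₁ : 0 < h.1) (h₂ : 0 < h.2) (z : ℝ × ℝ) : 0 < kernel2 z h :=
  mul_pos (gauss1_pos h₁ _) (gauss1_pos h₂ _)

lemma kernel2_neg (z h : ℝ × ℝ) : kernel2 (-z) h = kernel2 z h := by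
  simp only [kernel2, Prod.fst_neg, Prod.snd_neg, gauss1_neg]

lemma integral_kernel2_sq {h : ℝ × ℝ} (h₁ : 0 < h.1) (h₂ : 0 < h.2) :
    ∫ z, kernel2 z h ^ 2 = kernel2 0 h / 2 := by
  simp_rw [kernel2, mul_pow]
  rw [Measure.volume_eq_prod,
    integral_prod_mul (fun x ↦ gauss1 h.1 x ^ 2) (fun y ↦ gauss1 h.2 y ^ 2),
    integral_gauss1_sq h₁, integral_gauss1_sq h₂, Prod.fst_zero, Prod.snd_zero, gauss1_zero,
    gauss1_zero, sqrt_mul zero_le_two]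
  have h2 : (2 : ℝ) = √2 ^ 2 := (sq_sqrt zero_le_two).symm
  have hr : 0 < √2 := sqrt_pos.2 zero_lt_two
  generalize √2 = r at h2 hr ⊢
  field_simp
  rw [h2]

/-- Stochastic inconsistency of the renormalized partial model (Remark 1): there exist
points `s₁, s₃ ∈ ℝ²`, nonnegative weights `w₁₃, w₂₃` summing to 1, and a positive bandwidth
`h̲ = (h₁, h₂)` such that, with `n = 2` and `s₂` missing (`u₁ = 2`), the renormalized model
`f̃_Θ(s₃ | s₁) = κ₂(s₃ − s₁, h̲)` differs from
`∫ f̃_Θ(s₃ | s₁, s₂)·f̃_Θ(s₂ | s₁) ds₂`, i.e. Chapman–Kolmogorov consistency fails. -/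
theorem partial_model_inconsistent :
    ∃ (s₁ s₃ : ℝ × ℝ) (w₁₃ w₂₃ h₁ h₂ : ℝ),
      0 < h₁ ∧ 0 < h₂ ∧ 0 ≤ w₁₃ ∧ 0 ≤ w₂₃ ∧ w₁₃ + w₂₃ = 1 ∧
        kernel2 (s₃ - s₁) (h₁, h₂) ≠
          ∫ z : ℝ × ℝ,
            (w₁₃ * kernel2 (s₃ - s₁) (h₁, h₂) + w₂₃ * kernel2 (s₃ - z) (h₁, h₂)) *
              kernel2 (z - s₁) (h₁, h₂) := by
  refine ⟨0, 0, 0, 1, 1, 1, one_pos, one_pos, le_rfl, zero_le_one, zero_add 1, ?_⟩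
  have hintegrand : (fun z : ℝ × ℝ ↦
      (0 * kernel2 (0 - 0) (1, 1) + 1 * kernel2 (0 - z) (1, 1)) * kernel2 (z - 0) (1, 1)) =
        fun z ↦ kernel2 z (1, 1) ^ 2 := by
    funext z
    rw [sub_self, zero_sub, sub_zero, kernel2_neg, zero_mul, zero_add, one_mul, sq]
  rw [hintegrand, integral_kernel2_sq one_pos one_pos, sub_zero]
  exact (half_lt_self (kernel2_pos one_pos one_pos 0)).ne'
end
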